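/- Let G be a graph on n vertices obtained from the complete graph K_t on vertices {v₁,…,v_t} by adding n−t new vertices v_{t+1},…,v_n, each adjacent exactly to all of v₁,…,v_t. Then for 1 ≤ k ≤ n, a k-subset W of the vertices induces a disconnected subgraph if and only if W ⊆ {v_{t+1},…,v_n} and |W| ≥ 2, in which case G|_W has exactly k components; hence c_k(G) = C(n,k) + (k−1)·C(n−t,k). -/

import Mathlib

open Finset

/-- Number of connected components of the induced subgraph on `W`, summed over all
`k`-subsets, each minus 1: the `k`-th special graded Betti number of a graph. -/
noncomputable def graphB {V : Type} [Fintype V] [DecidableEq V] (k : ℕ) (G : SimpleGraph V) : ℤ :=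
  ∑ W ∈ Finset.powersetCard k (Finset.univ : Finset V),
    ((Nat.card (G.induce (W : Set V)).ConnectedComponent : ℤ) - 1)

/-- `c_k(G)`: total number of connected components over all `k`-subsets. -/
noncomputable def graphC {V : Type} [Fintype V] [DecidableEq V] (k : ℕ) (G : SimpleGraph V) : ℕ :=
  ∑ W ∈ Finset.powersetCard k (Finset.univ : Finset V),
    Nat.card (G.induce (W : Set V)).ConnectedComponent

/-- `G` is a `t`-connected sum of `G₁` and `G₂`. -/
def IsConnSum {V₁ V₂ V : Type} (t : ℕ) (G₁ : SimpleGraph V₁) (G₂ : SimpleGraph V₂)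
    (G : SimpleGraph V) : Prop :=
  ∃ (f₁ : V₁ ↪ V) (f₂ : V₂ ↪ V) (F₁ : Set V₁) (F₂ : Set V₂),
    Nat.card F₁ = t ∧ Nat.card F₂ = t ∧
    (∀ x ∈ F₁, ∀ y ∈ F₁, x ≠ y → G₁.Adj x y) ∧
    (∀ x ∈ F₂, ∀ y ∈ F₂, x ≠ y → G₂.Adj x y) ∧
    Set.range f₁ ∪ Set.range f₂ = Set.univ ∧
    Set.range f₁ ∩ Set.range f₂ = f₁ '' F₁ ∧
    f₁ '' F₁ = f₂ '' F₂ ∧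
    (∀ a b, G.Adj a b ↔
      ((∃ x y, G₁.Adj x y ∧ f₁ x = a ∧ f₁ y = b) ∨
       (∃ x y, G₂.Adj x y ∧ f₂ x = a ∧ f₂ y = b)))

/-- Iterated `t`-connected sums of a list of graphs. -/
inductive IsIterConnSum (t : ℕ) :
    List ((W : Type) × SimpleGraph W) → ((W : Type) × SimpleGraph W) → Prop
  | single (p : (W : Type) × SimpleGraph W) : IsIterConnSum t [p] p
  | cons {l : List ((W : Type) × SimpleGraph W)} {p q r : (W : Type) × SimpleGraph W} :
      IsIterConnSum t l p → IsConnSum t p.2 q.2 r.2 → IsIterConnSum t (l ++ [q]) r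

/-- An abstract simplicial complex on the finite vertex set `V`. -/
structure SimpComplex (V : Type) [DecidableEq V] where
  faces : Finset (Finset V)
  singleton_mem : ∀ v : V, {v} ∈ faces
  down_closed : ∀ F ∈ faces, ∀ F', F' ⊆ F → F' ∈ faces

/-- The 1-skeleton of a simplicial complex. -/
def SimpComplex.skeleton {V : Type} [DecidableEq V] (Δ : SimpComplex V) : SimpleGraph V where
  Adj x y := x ≠ y ∧ ({x, y} : Finset V) ∈ Δ.faces
  symm := by
    constructor
    intro x y h
    exact ⟨h.1.symm, by rw [Finset.pair_comm]; exact h.2⟩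
  loopless := by constructor; intro x h; exact h.1 rfl

/-- The graph of the restricted complex `Δ_W = {F ∩ W : F ∈ Δ}` on the vertex set `W`:
two vertices are connected iff they form a face of `Δ_W`. -/
def SimpComplex.restrictGraph {V : Type} [DecidableEq V] (Δ : SimpComplex V) (W : Finset V) :
    SimpleGraph (W : Set V) :=
  SimpleGraph.fromRel (fun x y => ∃ F ∈ Δ.faces, F ∩ W = {(x : V), (y : V)})

/-- The `k`-th special graded Betti number of a simplicial complex. -/
noncomputable def complexB {V : Type} [Fintype V] [DecidableEq V] (k : ℕ)
    (Δ : SimpComplex V) : ℤ :=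
  ∑ W ∈ Finset.powersetCard k (Finset.univ : Finset V),
    ((Nat.card (Δ.restrictGraph W).ConnectedComponent : ℤ) - 1)

/-- `Δ` is a `t`-connected sum of the simplicial complexes `Δ₁` and `Δ₂`. -/
def IsConnSumC {V₁ V₂ V : Type} [DecidableEq V₁] [DecidableEq V₂] [DecidableEq V] (t : ℕ)
    (Δ₁ : SimpComplex V₁) (Δ₂ : SimpComplex V₂) (Δ : SimpComplex V) : Prop :=
  ∃ (f₁ : V₁ ↪ V) (f₂ : V₂ ↪ V) (F₁ : Finset V₁) (F₂ : Finset V₂),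
    F₁.card = t ∧ F₂.card = t ∧ F₁ ∈ Δ₁.faces ∧ F₂ ∈ Δ₂.faces ∧
    (∀ F ∈ Δ₁.faces, F₁ ⊆ F → F = F₁) ∧
    (∀ F ∈ Δ₂.faces, F₂ ⊆ F → F = F₂) ∧
    Set.range f₁ ∪ Set.range f₂ = Set.univ ∧
    Set.range f₁ ∩ Set.range f₂ = ↑(F₁.image ⇑f₁) ∧
    F₁.image ⇑f₁ = F₂.image ⇑f₂ ∧
    Δ.faces = (Δ₁.faces.image (Finset.image ⇑f₁) ∪ Δ₂.faces.image (Finset.image ⇑f₂))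
      \ {F₁.image ⇑f₁}

/-!
A clique vertex is adjacent to every other vertex, so a subset containing one induces a connected
graph, while a subset of new vertices is independent and induces `k` isolated vertices. Hence
each `k`-subset contributes one component, plus `k - 1` more exactly when it is one of the
`C(n - t, k)` subsets of new vertices.
-/

namespace SimpleGraph

variable {V : Type*}

lemma card_connectedComponent_bot : Nat.card (⊥ : SimpleGraph V).ConnectedComponent = Nat.card V :=
  (Nat.card_eq_of_bijective _ ⟨fun _ _ h ↦ reachable_bot.mp (ConnectedComponent.exact h),
    Quot.mk_surjective⟩).symm

lemma Connected.card_connectedComponent {G : SimpleGraph V} (h : G.Connected) :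
    Nat.card G.ConnectedComponent = 1 := by
  have := h.preconnected.subsingleton_connectedComponent
  have : Nonempty G.ConnectedComponent := h.nonempty.map G.connectedComponentMk
  exact Nat.card_unique

lemma IsIndepSet.induce_eq_bot {G : SimpleGraph V} {s : Set V} (h : G.IsIndepSet s) :
    G.induce s = ⊥ := by
  ext a b
  simpa using fun hab ↦ h a.2 b.2 (G.ne_of_adj hab) hab

lemma induce_connected_of_forall_adj (G : SimpleGraph V) {s : Set V} {x : V} (hx : x ∈ s)
    (hadj : ∀ y ∈ s, y ≠ x → G.Adj y x) : (G.induce s).Connected := by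
  have hreach : ∀ y : s, (G.induce s).Reachable y ⟨x, hx⟩ := fun y ↦ by
    by_cases hyx : (y : V) = x
    · exact (Subtype.ext hyx : y = ⟨x, hx⟩) ▸ Reachable.refl y
    · exact Adj.reachable (hadj y y.2 hyx)
  exact (connected_iff _).mpr ⟨fun y z ↦ (hreach y).trans (hreach z).symm, ⟨⟨x, hx⟩⟩⟩

end SimpleGraph

open SimpleGraph

section Cone

variable {V : Type} {G : SimpleGraph V} {A : V → Prop}

lemma induce_connected_of_apex_mem (hG : ∀ x y, G.Adj x y ↔ x ≠ y ∧ (A x ∨ A y))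
    {W : Finset V} {x : V} (hxW : x ∈ W) (hx : A x) : (G.induce (W : Set V)).Connected :=
  G.induce_connected_of_forall_adj hxW fun y _ hyx ↦ (hG y x).mpr ⟨hyx, .inr hx⟩

lemma induce_eq_bot_of_forall_not_apex (hG : ∀ x y, G.Adj x y ↔ x ≠ y ∧ (A x ∨ A y))
    {W : Finset V} (hW : ∀ x ∈ W, ¬A x) : G.induce (W : Set V) = ⊥ :=
  IsIndepSet.induce_eq_bot fun x hx y hy _ hxy ↦ by
    rcases ((hG x y).mp hxy).2 with h | h
    exacts [hW x hx h, hW y hy h]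

lemma not_connected_induce_iff (hG : ∀ x y, G.Adj x y ↔ x ≠ y ∧ (A x ∨ A y))
    {W : Finset V} (hW : W.Nonempty) :
    ¬(G.induce (W : Set V)).Connected ↔ (∀ x ∈ W, ¬A x) ∧ 2 ≤ W.card := by
  by_cases hA : ∀ x ∈ W, ¬A x
  · rw [induce_eq_bot_of_forall_not_apex hG hA, connected_bot_iff, and_iff_right hA]
    simp [hW.to_subtype, not_subsingleton_iff_nontrivial,
      ← Finite.one_lt_card_iff_nontrivial, Nat.lt_iff_add_one_le]
  · obtain ⟨x, hxW, hx⟩ : ∃ x ∈ W, A x := by simpa using hA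
    simpa [hA] using induce_connected_of_apex_mem hG hxW hx

lemma card_connectedComponent_induce (hG : ∀ x y, G.Adj x y ↔ x ≠ y ∧ (A x ∨ A y))
    {W : Finset V} [Decidable (∀ x ∈ W, ¬A x)] :
    Nat.card (G.induce (W : Set V)).ConnectedComponent =
      if ∀ x ∈ W, ¬A x then W.card else 1 := by
  split_ifs with hA
  · rw [induce_eq_bot_of_forall_not_apex hG hA, card_connectedComponent_bot]
    simp
  · obtain ⟨x, hxW, hx⟩ : ∃ x ∈ W, A x := by simpa using hA
    exact (induce_connected_of_apex_mem hG hxW hx).card_connectedComponent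

lemma graphC_eq [Fintype V] [DecidableEq V] [DecidablePred A]
    (hG : ∀ x y, G.Adj x y ↔ x ≠ y ∧ (A x ∨ A y)) {k : ℕ} (hk : 1 ≤ k) :
    graphC k G = (Fintype.card V).choose k + (k - 1) * (#{x | ¬A x}).choose k := by
  set B : Finset V := {x | ¬A x}
  have hterm : ∀ W ∈ powersetCard k (univ : Finset V),
      Nat.card (G.induce (W : Set V)).ConnectedComponent = 1 + if W ⊆ B then k - 1 else 0 := by
    intro W hW
    have hWk : W.card = k := (mem_powersetCard.mp hW).2
    have hsub : (∀ x ∈ W, ¬A x) ↔ W ⊆ B := by simp [B, subset_iff]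
    rw [card_connectedComponent_induce hG, hWk]
    simp only [hsub]
    split_ifs <;> omega
  have hfilter : {W ∈ powersetCard k (univ : Finset V) | W ⊆ B} = powersetCard k B := by
    ext W
    simp [mem_powersetCard, and_comm]
  rw [graphC, sum_congr rfl hterm, sum_add_distrib, ← sum_filter, hfilter]
  simp [card_powersetCard, mul_comm]

end Cone

theorem ck_clique_with_pendants_general (n t k : ℕ) (G : SimpleGraph (Fin n))
    (hG : ∀ x y, G.Adj x y ↔ x ≠ y ∧ ((x : ℕ) < t ∨ (y : ℕ) < t))
    (hk1 : 1 ≤ k) :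
    (∀ W ∈ Finset.powersetCard k (Finset.univ : Finset (Fin n)),
      (¬ (G.induce (W : Set (Fin n))).Connected ↔ ((∀ x ∈ W, t ≤ (x : ℕ)) ∧ 2 ≤ k)) ∧
      ((∀ x ∈ W, t ≤ (x : ℕ)) → 2 ≤ k →
        Nat.card (G.induce (W : Set (Fin n))).ConnectedComponent = k)) ∧
    graphC k G = n.choose k + (k - 1) * ((n - t).choose k) := by
  have hnew (W : Finset (Fin n)) : (∀ x ∈ W, t ≤ (x : ℕ)) ↔ ∀ x ∈ W, ¬(x : ℕ) < t := by
    simp only [not_lt]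
  refine ⟨fun W hW ↦ ?_, ?_⟩
  · have hWk : W.card = k := (mem_powersetCard.mp hW).2
    have hWne : W.Nonempty := card_pos.mp (hWk ▸ hk1)
    refine ⟨?_, fun hWnew _ ↦ ?_⟩
    · rw [not_connected_induce_iff hG hWne, hWk, hnew]
    · rw [card_connectedComponent_induce hG, if_pos ((hnew W).mp hWnew), hWk]
  · have hcard : #{x : Fin n | ¬(x : ℕ) < t} = n - t := by
      rw [filter_not, card_sdiff_of_subset (filter_subset _ _), Fin.card_filter_val_lt, card_univ,
        Fintype.card_fin]
      omega
    rw [graphC_eq hG hk1, Fintype.card_fin, hcard]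

/-- for the graph obtained from `K_t` by adding `n - t` vertices each joined
exactly to the `t` clique vertices: a `k`-subset (`1 ≤ k ≤ n`) induces a disconnected graph
iff it consists of new vertices and has at least two elements, in which case it has `k`
components; hence `c_k(G) = C(n,k) + (k-1)·C(n-t,k)`. -/
theorem ck_clique_with_pendants (n t k : ℕ) (ht : t ≤ n) (G : SimpleGraph (Fin n))
    (hG : ∀ x y, G.Adj x y ↔ x ≠ y ∧ ((x : ℕ) < t ∨ (y : ℕ) < t))
    (hk1 : 1 ≤ k) (hkn : k ≤ n) :
    (∀ W ∈ Finset.powersetCard k (Finset.univ : Finset (Fin n)),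
      (¬ (G.induce (W : Set (Fin n))).Connected ↔ ((∀ x ∈ W, t ≤ (x : ℕ)) ∧ 2 ≤ k)) ∧
      ((∀ x ∈ W, t ≤ (x : ℕ)) → 2 ≤ k →
        Nat.card (G.induce (W : Set (Fin n))).ConnectedComponent = k)) ∧
    graphC k G = n.choose k + (k - 1) * ((n - t).choose k) :=
  ck_clique_with_pendants_general n t k G hG hk1
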